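/- Let p ≡ 9 (mod 16) be prime and let (a_p, b_p) be the minimal positive solution of a² - 2b² = p. Let α ∈ ℤ[ζ₈] satisfy σ₁(α)σ₇(α) = a_p + b_p√2. Then for all integers k, n, the squared canonical length of α ζ₈^k (1+√2)^n equals 4x_n where x_n + y_n√2 = (1+√2)^{2n}(a_p + b_p√2), and x_n ≥ a_p. Hence the shortest generator of the ideal (α) ⊂ ℤ[ζ₈] has canonical length √(4a_p). -/

import Mathlib

open Complex

/-- A primitive 8th root of unity in `ℂ`. -/
noncomputable def ζ₈ : ℂ := Complex.exp (2 * Real.pi * Complex.I / 8)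

/-- The image under `σⱼ : ζ₈ ↦ ζ₈ʲ` of the element `a + b ζ₈ + c ζ₈² + d ζ₈³` of `ℤ[ζ₈]`. -/
noncomputable def conj8 (a b c d : ℤ) (j : ℕ) : ℂ :=
  a + b * ζ₈ ^ j + c * ζ₈ ^ (2 * j) + d * ζ₈ ^ (3 * j)

lemma sqrt2C_sq : ((Real.sqrt 2 : ℝ) : ℂ) ^ 2 = 2 := by
  norm_cast
  exact Real.sq_sqrt (by norm_num)

lemma zeta8_val : ζ₈ = (Real.sqrt 2 : ℂ) / 2 + (Real.sqrt 2 : ℂ) / 2 * I := by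
  have h : (2 * (Real.pi : ℂ) * Complex.I / 8) = ((Real.pi / 4 : ℝ) : ℂ) * I := by
    push_cast; ring
  rw [ζ₈, h, Complex.exp_mul_I, ← Complex.ofReal_cos, ← Complex.ofReal_sin,
    Real.cos_pi_div_four, Real.sin_pi_div_four]
  push_cast
  ring

lemma zeta8_abs : ‖ζ₈‖ = 1 := by
  have h : (2 * (Real.pi : ℂ) * Complex.I / 8) = ((Real.pi / 4 : ℝ) : ℂ) * I := by
    push_cast; ring
  rw [ζ₈, h, Complex.norm_exp_ofReal_mul_I]

lemma zeta8_pow2 : ζ₈ ^ 2 = I := by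
  rw [zeta8_val]
  linear_combination (Complex.I / 2) * sqrt2C_sq
    + (((Real.sqrt 2 : ℝ) : ℂ) ^ 2 / 4) * Complex.I_sq

lemma zeta8_pow4 : ζ₈ ^ 4 = -1 := by
  have h : ζ₈ ^ 4 = (ζ₈ ^ 2) ^ 2 := by ring
  rw [h, zeta8_pow2, Complex.I_sq]

lemma zeta8_pow3 : ζ₈ ^ 3 = -((Real.sqrt 2 : ℂ) / 2) + (Real.sqrt 2 : ℂ) / 2 * I := by
  have h : ζ₈ ^ 3 = ζ₈ ^ 2 * ζ₈ := by ring
  rw [h, zeta8_pow2, zeta8_val]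
  linear_combination ((Real.sqrt 2 : ℂ) / 2) * Complex.I_sq

lemma zeta8_pow6 : ζ₈ ^ 6 = -I := by
  have h : ζ₈ ^ 6 = ζ₈ ^ 4 * ζ₈ ^ 2 := by ring
  rw [h, zeta8_pow4, zeta8_pow2]; ring

lemma zeta8_pow7 : ζ₈ ^ 7 = (Real.sqrt 2 : ℂ) / 2 - (Real.sqrt 2 : ℂ) / 2 * I := by
  have h : ζ₈ ^ 7 = ζ₈ ^ 4 * ζ₈ ^ 3 := by ring
  rw [h, zeta8_pow4, zeta8_pow3]; ring

lemma zeta8_pow9 : ζ₈ ^ 9 = (Real.sqrt 2 : ℂ) / 2 + (Real.sqrt 2 : ℂ) / 2 * I := by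
  have h : ζ₈ ^ 9 = (ζ₈ ^ 4) ^ 2 * ζ₈ := by ring
  rw [h, zeta8_pow4, zeta8_val]; ring

lemma zeta8_pow14 : ζ₈ ^ 14 = -I := by
  have h : ζ₈ ^ 14 = (ζ₈ ^ 4) ^ 3 * ζ₈ ^ 2 := by ring
  rw [h, zeta8_pow4, zeta8_pow2]; ring

lemma zeta8_pow21 : ζ₈ ^ 21 = -((Real.sqrt 2 : ℂ) / 2) - (Real.sqrt 2 : ℂ) / 2 * I := by
  have h : ζ₈ ^ 21 = (ζ₈ ^ 4) ^ 5 * ζ₈ := by ring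
  rw [h, zeta8_pow4, zeta8_val]; ring

/-- integers attached to √2 are determined -/
lemma int_sqrt2_inj {S T A B : ℤ} (h : (S : ℝ) + T * Real.sqrt 2 = A + B * Real.sqrt 2) :
    S = A ∧ T = B := by
  by_cases hTB : T = B
  · subst hTB
    have : (S : ℝ) = A := by linarith
    exact ⟨by exact_mod_cast this, rfl⟩
  · exfalso
    have hne : ((T : ℝ) - B) ≠ 0 := by
      intro hc
      exact hTB (by exact_mod_cast sub_eq_zero.mp hc)
    have hval : Real.sqrt 2 = ((A : ℝ) - S) / ((T : ℝ) - B) := by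
      field_simp
      linarith
    have : Real.sqrt 2 = (((A - S : ℤ) / (T - B : ℤ) : ℚ) : ℝ) := by
      rw [hval]; push_cast; ring
    exact irrational_sqrt_two ⟨_, this.symm⟩

lemma aux_zpow (g : Zsqrtd (2 : ℤ) →* ℝ) (u : (Zsqrtd (2 : ℤ))ˣ) (n : ℤ) :
    g ↑(u ^ n) = (g ↑u) ^ n := by
  rw [← Units.coe_map g (u ^ n), map_zpow, Units.val_zpow_eq_zpow_val, Units.coe_map]

lemma aux_norm (u : (Zsqrtd (2 : ℤ))ˣ) (hu : Zsqrtd.norm (u : Zsqrtd (2 : ℤ)) = 1) (n : ℤ) :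
    Zsqrtd.norm ((u ^ n : (Zsqrtd (2 : ℤ))ˣ) : Zsqrtd (2 : ℤ)) = 1 := by
  have h1 : Units.map (Zsqrtd.normMonoidHom (d := 2)) u = 1 := by
    ext
    simpa [Zsqrtd.normMonoidHom] using hu
  have h3 : Zsqrtd.norm ((u ^ n : (Zsqrtd (2 : ℤ))ˣ) : Zsqrtd (2 : ℤ))
      = ((Units.map (Zsqrtd.normMonoidHom (d := 2)) (u ^ n) : ℤˣ) : ℤ) :=
    (Units.coe_map (Zsqrtd.normMonoidHom (d := 2)) (u ^ n)).symm
  rw [h3, map_zpow, h1, one_zpow, Units.val_one]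

lemma zpow_sq' (t : ℝ) (n : ℤ) : (t ^ n) ^ 2 = (t ^ 2) ^ n := by
  rw [sq t, mul_zpow, sq]

lemma apos_aux {A B P S : ℝ} (hA : 0 < A) (hB : 0 < B) (hS : S ^ 2 = 2) (hP2 : 0 < P)
    (h : A ^ 2 - 2 * B ^ 2 = P) (hS0 : 0 < S) : 0 < A - B * S := by nlinarith

noncomputable def toR : Zsqrtd (2 : ℤ) →+* ℝ :=
  Zsqrtd.lift ⟨Real.sqrt 2, by
    rw [show ((2 : ℤ) : ℝ) = 2 by norm_num]
    exact Real.mul_self_sqrt (by norm_num)⟩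

noncomputable def toR' : Zsqrtd (2 : ℤ) →+* ℝ :=
  Zsqrtd.lift ⟨-Real.sqrt 2, by
    rw [show ((2 : ℤ) : ℝ) = 2 by norm_num]
    rw [neg_mul_neg]
    exact Real.mul_self_sqrt (by norm_num)⟩

set_option maxHeartbeats 1000000 in
theorem shortest_generator_p9mod16
    (p : ℕ) (hp : p.Prime) (hp9 : p % 16 = 9)
    (a b : ℤ) (ha : 0 < a) (hb : 0 < b) (hab : a ^ 2 - 2 * b ^ 2 = (p : ℤ))
    (hmin : ∀ a' b' : ℤ, 0 < a' → 0 < b' → a' ^ 2 - 2 * b' ^ 2 = (p : ℤ) → a ≤ a')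
    (c₀ c₁ c₂ c₃ : ℤ)
    (hα : conj8 c₀ c₁ c₂ c₃ 1 * conj8 c₀ c₁ c₂ c₃ 7 = (a : ℂ) + b * Real.sqrt 2) :
    ∀ k n : ℤ, ∃ x y : ℤ,
      ((1 + Real.sqrt 2) ^ (2 * n) * ((a : ℝ) + b * Real.sqrt 2)
        = (x : ℝ) + y * Real.sqrt 2) ∧
      (2 * ‖conj8 c₀ c₁ c₂ c₃ 1 * ζ₈ ^ k * (((1 + Real.sqrt 2) ^ n : ℝ) : ℂ)‖ ^ 2
          + 2 * ‖conj8 c₀ c₁ c₂ c₃ 3 * ζ₈ ^ (3 * k) *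
              (((1 - Real.sqrt 2) ^ n : ℝ) : ℂ)‖ ^ 2
        = 4 * x) ∧
      a ≤ x := by
  intro k n
  set s : ℝ := Real.sqrt 2 with hs_def
  have hs : s ^ 2 = 2 := Real.sq_sqrt (by norm_num)
  have hs0 : 0 < s := Real.sqrt_pos.mpr (by norm_num)
  have hs32 : s < 3 / 2 := by nlinarith
  -- explicit forms of the conjugates
  have hσ1 : conj8 c₀ c₁ c₂ c₃ 1
      = (((c₀ : ℝ) + s / 2 * (c₁ - c₃) : ℝ) : ℂ) + (((c₂ : ℝ) + s / 2 * (c₁ + c₃) : ℝ) : ℂ) * I := by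
    simp only [conj8, pow_one, Nat.reduceMul]
    rw [zeta8_pow2, zeta8_pow3, zeta8_val]
    push_cast
    ring
  have hσ7 : conj8 c₀ c₁ c₂ c₃ 7
      = (((c₀ : ℝ) + s / 2 * (c₁ - c₃) : ℝ) : ℂ) - (((c₂ : ℝ) + s / 2 * (c₁ + c₃) : ℝ) : ℂ) * I := by
    simp only [conj8, pow_one, Nat.reduceMul]
    rw [zeta8_pow7, zeta8_pow14, zeta8_pow21]
    push_cast
    ring
  have hσ3 : conj8 c₀ c₁ c₂ c₃ 3
      = (((c₀ : ℝ) - s / 2 * (c₁ - c₃) : ℝ) : ℂ) + ((-(c₂ : ℝ) + s / 2 * (c₁ + c₃) : ℝ) : ℂ) * I := by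
    simp only [conj8, pow_one, Nat.reduceMul]
    rw [zeta8_pow3, zeta8_pow6, zeta8_pow9]
    push_cast
    ring
  -- the product σ₁ σ₇
  have hprod : conj8 c₀ c₁ c₂ c₃ 1 * conj8 c₀ c₁ c₂ c₃ 7
      = ((((c₀ : ℝ) + s / 2 * (c₁ - c₃)) ^ 2 + ((c₂ : ℝ) + s / 2 * (c₁ + c₃)) ^ 2 : ℝ) : ℂ) := by
    rw [hσ1, hσ7]
    push_cast
    linear_combination (-(((c₂ : ℂ)) + (s : ℂ) / 2 * ((c₁ : ℂ) + c₃)) ^ 2) * Complex.I_sq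
  have hreal : ((c₀ : ℝ) + s / 2 * (c₁ - c₃)) ^ 2 + ((c₂ : ℝ) + s / 2 * (c₁ + c₃)) ^ 2
      = (a : ℝ) + b * s := by
    have h1 : ((((c₀ : ℝ) + s / 2 * (c₁ - c₃)) ^ 2 + ((c₂ : ℝ) + s / 2 * (c₁ + c₃)) ^ 2 : ℝ) : ℂ)
        = (((a : ℝ) + b * s : ℝ) : ℂ) := by
      rw [← hprod, hα]; push_cast; ring
    exact_mod_cast h1
  -- identify integer coefficients
  have hexp : ((c₀ : ℝ) + s / 2 * (c₁ - c₃)) ^ 2 + ((c₂ : ℝ) + s / 2 * (c₁ + c₃)) ^ 2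
      = ((c₀ ^ 2 + c₁ ^ 2 + c₂ ^ 2 + c₃ ^ 2 : ℤ) : ℝ)
        + ((c₀ * c₁ - c₀ * c₃ + c₁ * c₂ + c₂ * c₃ : ℤ) : ℝ) * s := by
    push_cast
    linear_combination (((c₁ : ℝ) ^ 2 + (c₃ : ℝ) ^ 2) / 2) * hs
  have hST : (c₀ ^ 2 + c₁ ^ 2 + c₂ ^ 2 + c₃ ^ 2 : ℤ) = a
      ∧ (c₀ * c₁ - c₀ * c₃ + c₁ * c₂ + c₂ * c₃ : ℤ) = b :=
    int_sqrt2_inj (by rw [← hs_def, ← hexp, hreal])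
  obtain ⟨hSa, hTb⟩ := hST
  have hSa' : ((c₀ : ℝ) ^ 2 + c₁ ^ 2 + c₂ ^ 2 + c₃ ^ 2) = (a : ℝ) := by exact_mod_cast hSa
  have hTb' : ((c₀ : ℝ) * c₁ - c₀ * c₃ + c₁ * c₂ + c₂ * c₃) = (b : ℝ) := by exact_mod_cast hTb
  -- squared moduli of conjugates
  have key1 : Complex.normSq (conj8 c₀ c₁ c₂ c₃ 1) = (a : ℝ) + b * s := by
    rw [hσ1, Complex.normSq_add_mul_I, hreal]
  have key3 : Complex.normSq (conj8 c₀ c₁ c₂ c₃ 3) = (a : ℝ) - b * s := by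
    rw [hσ3, Complex.normSq_add_mul_I]
    nlinarith [hs, hSa', hTb']
  -- the Zsqrtd unit and the element z
  have humul : ((⟨3, 2⟩ : Zsqrtd (2 : ℤ)) * ⟨3, -2⟩ : Zsqrtd (2 : ℤ)) = 1 := by
    ext <;> simp [Zsqrtd.re_mul, Zsqrtd.im_mul] <;> ring
  have humul' : ((⟨3, -2⟩ : Zsqrtd (2 : ℤ)) * ⟨3, 2⟩ : Zsqrtd (2 : ℤ)) = 1 := by
    rw [← humul]; ring
  obtain ⟨u, hu_val⟩ : ∃ u : (Zsqrtd (2 : ℤ))ˣ, (u : Zsqrtd (2 : ℤ)) = ⟨3, 2⟩ :=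
    ⟨⟨⟨3, 2⟩, ⟨3, -2⟩, humul, humul'⟩, rfl⟩
  obtain ⟨z, hz_def⟩ : ∃ z : Zsqrtd (2 : ℤ),
      z = ((u ^ n : (Zsqrtd (2 : ℤ))ˣ) : Zsqrtd (2 : ℤ)) * ⟨a, b⟩ := ⟨_, rfl⟩
  have htoRu : toR (u : Zsqrtd (2 : ℤ)) = 3 + 2 * s := by
    rw [hu_val]
    show (Zsqrtd.lift _) (⟨3, 2⟩ : Zsqrtd (2 : ℤ)) = 3 + 2 * s
    rw [Zsqrtd.lift_apply_apply]
    norm_num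
    try ring
  have htoR'u : toR' (u : Zsqrtd (2 : ℤ)) = 3 - 2 * s := by
    rw [hu_val]
    show (Zsqrtd.lift _) (⟨3, 2⟩ : Zsqrtd (2 : ℤ)) = 3 - 2 * s
    rw [Zsqrtd.lift_apply_apply]
    norm_num
    try ring
  have htoRab : toR (⟨a, b⟩ : Zsqrtd (2 : ℤ)) = (a : ℝ) + b * s := by
    show (Zsqrtd.lift _) (⟨a, b⟩ : Zsqrtd (2 : ℤ)) = (a : ℝ) + b * s
    rw [Zsqrtd.lift_apply_apply]
  have htoR'ab : toR' (⟨a, b⟩ : Zsqrtd (2 : ℤ)) = (a : ℝ) - b * s := by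
    show (Zsqrtd.lift _) (⟨a, b⟩ : Zsqrtd (2 : ℤ)) = (a : ℝ) - b * s
    rw [Zsqrtd.lift_apply_apply]
    ring
  have htoR_u : toR ((u ^ n : (Zsqrtd (2 : ℤ))ˣ) : Zsqrtd (2 : ℤ)) = (3 + 2 * s) ^ n := by
    have h0 := aux_zpow (toR : Zsqrtd (2 : ℤ) →+* ℝ).toMonoidHom u n
    simp only [RingHom.toMonoidHom_eq_coe] at h0
    rw [show ((toR : Zsqrtd (2 : ℤ) →+* ℝ) : Zsqrtd (2 : ℤ) →* ℝ)
      ((u ^ n : (Zsqrtd (2 : ℤ))ˣ) : Zsqrtd (2 : ℤ))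
      = toR ((u ^ n : (Zsqrtd (2 : ℤ))ˣ) : Zsqrtd (2 : ℤ)) from rfl] at h0
    rw [show ((toR : Zsqrtd (2 : ℤ) →+* ℝ) : Zsqrtd (2 : ℤ) →* ℝ) (u : Zsqrtd (2 : ℤ))
      = toR (u : Zsqrtd (2 : ℤ)) from rfl] at h0
    rw [h0, htoRu]
  have htoR'_u : toR' ((u ^ n : (Zsqrtd (2 : ℤ))ˣ) : Zsqrtd (2 : ℤ)) = (3 - 2 * s) ^ n := by
    have h0 := aux_zpow (toR' : Zsqrtd (2 : ℤ) →+* ℝ).toMonoidHom u n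
    simp only [RingHom.toMonoidHom_eq_coe] at h0
    rw [show ((toR' : Zsqrtd (2 : ℤ) →+* ℝ) : Zsqrtd (2 : ℤ) →* ℝ)
      ((u ^ n : (Zsqrtd (2 : ℤ))ˣ) : Zsqrtd (2 : ℤ))
      = toR' ((u ^ n : (Zsqrtd (2 : ℤ))ˣ) : Zsqrtd (2 : ℤ)) from rfl] at h0
    rw [show ((toR' : Zsqrtd (2 : ℤ) →+* ℝ) : Zsqrtd (2 : ℤ) →* ℝ) (u : Zsqrtd (2 : ℤ))
      = toR' (u : Zsqrtd (2 : ℤ)) from rfl] at h0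
    rw [h0, htoR'u]
  have htoRz : toR z = (z.re : ℝ) + z.im * s := by
    show (Zsqrtd.lift _) z = (z.re : ℝ) + z.im * s
    rw [Zsqrtd.lift_apply_apply]
  have htoR'z : toR' z = (z.re : ℝ) - z.im * s := by
    show (Zsqrtd.lift _) z = (z.re : ℝ) - z.im * s
    rw [Zsqrtd.lift_apply_apply]
    ring
  have hx : (z.re : ℝ) + z.im * s = (3 + 2 * s) ^ n * ((a : ℝ) + b * s) := by
    rw [← htoRz, hz_def, map_mul, htoR_u, htoRab]
  have hxc : (z.re : ℝ) - z.im * s = (3 - 2 * s) ^ n * ((a : ℝ) - b * s) := by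
    rw [← htoR'z, hz_def, map_mul, htoR'_u, htoR'ab]
  have ha' : (0 : ℝ) < a := by exact_mod_cast ha
  have hb' : (0 : ℝ) < b := by exact_mod_cast hb
  have hab' : (a : ℝ) ^ 2 - 2 * b ^ 2 = (p : ℝ) := by exact_mod_cast hab
  have hpp : (0 : ℝ) < p := by exact_mod_cast hp.pos
  have habs : (0 : ℝ) < (a : ℝ) - b * s := apos_aux ha' hb' hs hpp hab' hs0
  have habsp : (0 : ℝ) < (a : ℝ) + b * s := by positivity
  have hP : (0 : ℝ) < (3 + 2 * s) ^ n := zpow_pos (by linarith) n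
  have hQ : (0 : ℝ) < (3 - 2 * s) ^ n := zpow_pos (by linarith) n
  have hxposR : (0 : ℝ) < z.re := by
    have h1 := mul_pos hP habsp
    have h2 := mul_pos hQ habs
    linarith [hx, hxc]
  have hxpos : 0 < z.re := by exact_mod_cast hxposR
  refine ⟨z.re, z.im, ?_, ?_, ?_⟩
  · -- first equation
    have h12 : ((1 + s) : ℝ) ^ (2 * n) = (3 + 2 * s) ^ n := by
      have hne : (1 + s) ≠ 0 := by positivity
      have hv : (1 + s) = ((Units.mk0 (1 + s) hne : ℝˣ) : ℝ) := rfl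
      rw [hv, ← Units.val_zpow_eq_zpow_val, zpow_mul, Units.val_zpow_eq_zpow_val,
        Units.val_zpow_eq_zpow_val]
      congr 1
      rw [show (2 : ℤ) = ((2 : ℕ) : ℤ) from rfl, zpow_natCast]
      show ((Units.mk0 (1 + s) hne : ℝˣ) : ℝ) ^ 2 = 3 + 2 * s
      rw [← hv]
      linear_combination hs
    rw [h12, hx]
  · -- second equation
    have e₁ : ‖conj8 c₀ c₁ c₂ c₃ 1 * ζ₈ ^ k * (((1 + s) ^ n : ℝ) : ℂ)‖ ^ 2
        = ((a : ℝ) + b * s) * ((1 + s) ^ 2) ^ n := by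
      rw [norm_mul, norm_mul, norm_zpow, zeta8_abs, one_zpow, mul_one, Complex.norm_real, Real.norm_eq_abs,
        mul_pow, Complex.sq_norm, key1, _root_.sq_abs, zpow_sq']
    have e₃ : ‖conj8 c₀ c₁ c₂ c₃ 3 * ζ₈ ^ (3 * k) * (((1 - s) ^ n : ℝ) : ℂ)‖ ^ 2
        = ((a : ℝ) - b * s) * ((1 - s) ^ 2) ^ n := by
      rw [norm_mul, norm_mul, norm_zpow, zeta8_abs, one_zpow, mul_one, Complex.norm_real, Real.norm_eq_abs,
        mul_pow, Complex.sq_norm, key3, _root_.sq_abs, zpow_sq']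
    rw [e₁, e₃]
    have h1p : ((1 + s) : ℝ) ^ 2 = 3 + 2 * s := by linear_combination hs
    have h1m : ((1 - s) : ℝ) ^ 2 = 3 - 2 * s := by linear_combination hs
    rw [h1p, h1m]
    linarith [hx, hxc]
  · -- minimality
    have hnormu : Zsqrtd.norm (u : Zsqrtd (2 : ℤ)) = 1 := by
      rw [hu_val]
      simp [Zsqrtd.norm_def]
    have hnorm : Zsqrtd.norm z = (p : ℤ) := by
      rw [hz_def, Zsqrtd.norm_mul, aux_norm u hnormu n, one_mul, Zsqrtd.norm_def]
      show a * a - 2 * b * b = (p : ℤ)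
      linarith [hab, sq_nonneg a]
    have hxy : z.re ^ 2 - 2 * z.im ^ 2 = (p : ℤ) := by
      rw [Zsqrtd.norm_def] at hnorm
      nlinarith [hnorm]
    have hyne : z.im ≠ 0 := by
      intro hy0
      rw [hy0] at hxy
      have hsq : z.re ^ 2 = (p : ℤ) := by linarith
      have h2 : (z.re.natAbs : ℤ) ^ 2 = (p : ℤ) := by rw [Int.natAbs_sq, hsq]
      have h2' : z.re.natAbs ^ 2 = p := by exact_mod_cast h2
      have hdvd : z.re.natAbs ∣ p := ⟨z.re.natAbs, by rw [← h2']; ring⟩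
      rcases hp.eq_one_or_self_of_dvd _ hdvd with h1 | h1
      · rw [h1] at h2'
        simp at h2'
        exact absurd h2'.symm hp.ne_one
      · rw [h1] at h2'
        have := hp.one_lt
        nlinarith [h2']
    refine hmin z.re |z.im| hxpos (abs_pos.mpr hyne) ?_
    rw [_root_.sq_abs]
    exact hxy
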